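/- arXiv:2602.09639 — 2 statements merged into one kernel-verified Lean document; each statement's English description precedes it below -/
import Mathlib

section
/- Let $p_X$ be a compactly supported probability measure on $\mathbb{R}^d$, and for $\omega > 0$ let $q_\omega(\cdot|y)$ be the posterior $q_\omega(dx|y) \propto e^{-\|x-y\|^2/(2\omega^2)} p_X(dx)$. Then $\partial_\omega(\omega^2 \nabla \log p_\omega(y)) = \omega^{-3}\,\mathrm{Cov}_{q_\omega}(X, \|X - y\|^2 \mid Y = y)$, where $p_\omega = p_X * \mathcal{N}(0,\omega^2 I)$ and the covariance is the vector of covariances of each coordinate of $X$ with the scalar $\|X - y\|^2$. -/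
/-!
Tweedie's formula `ω² ∇ log p_ω(y) = E_{q_ω}[X | y] - y` comes from differentiating
`log ∫ e^{-‖y-x‖²/(2ω²)} p_X(dx)` in `y` under the integral sign, which brings down `(x - y)/ω²`.
The posterior mean is the quotient `N(ω)⁻¹ V(ω)` of the integrals of the weight
`e^{-‖x-y‖²/(2ω²)}` against `1` and against `x`, and `∂_ω` of the weight is `ω⁻³ ‖x-y‖²` times the
weight, so the quotient rule turns `(N⁻¹ V)'` into `ω⁻³` times the posterior covariance of `X` and
`‖X - y‖²`. Compact support of `p_X` keeps all differentiated integrands uniformly bounded.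
-/

open MeasureTheory Real

/-- Isotropic Gaussian density with variance `ω²` in dimension `d`. -/
noncomputable def gaussDensity (d : ℕ) (ω : ℝ) (v : EuclideanSpace ℝ (Fin d)) : ℝ :=
  (2 * π * ω ^ 2) ^ (-(d : ℝ) / 2) * Real.exp (-‖v‖ ^ 2 / (2 * ω ^ 2))

/-- Posterior weight `e^{-‖x-y‖²/(2ω²)}`. -/
noncomputable def wgt {d : ℕ} (ω : ℝ) (y x : EuclideanSpace ℝ (Fin d)) : ℝ :=
  Real.exp (-‖x - y‖ ^ 2 / (2 * ω ^ 2))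

/-- Posterior mean `E_{q_ω}[X | Y = y]`. -/
noncomputable def postMean {d : ℕ} (pX : Measure (EuclideanSpace ℝ (Fin d))) (ω : ℝ)
    (y : EuclideanSpace ℝ (Fin d)) : EuclideanSpace ℝ (Fin d) :=
  (∫ x, wgt ω y x ∂pX)⁻¹ • ∫ x, wgt ω y x • x ∂pX

/-- The vector of posterior covariances `Cov_{q_ω}(X, ‖X - y‖² | Y = y)`. -/
noncomputable def postCrossCov {d : ℕ} (pX : Measure (EuclideanSpace ℝ (Fin d))) (ω : ℝ)
    (y : EuclideanSpace ℝ (Fin d)) : EuclideanSpace ℝ (Fin d) :=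
  ((∫ x, wgt ω y x ∂pX)⁻¹ • ∫ x, (wgt ω y x * ‖x - y‖ ^ 2) • x ∂pX)
    - ((∫ x, wgt ω y x ∂pX)⁻¹ * ∫ x, wgt ω y x * ‖x - y‖ ^ 2 ∂pX) • postMean pX ω y

open Set Function Metric Filter Topology

section CompactSupport

variable {α G : Type*} [TopologicalSpace α] [MeasurableSpace α] [NormedAddCommGroup G]
  {μ : Measure α} {K : Set α}

lemma integrable_of_continuous_of_ae_mem_compact [T2Space α] [OpensMeasurableSpace α]
    [IsFiniteMeasure μ] (hK : IsCompact K) (hμK : ∀ᵐ x ∂μ, x ∈ K) {f : α → G}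
    (hf : Continuous f) : Integrable f μ := by
  rw [← Measure.restrict_eq_self_of_ae_mem hμK]
  exact hf.continuousOn.integrableOn_compact hK

lemma exists_ae_bound_of_continuousOn_prod {H : Type*} [TopologicalSpace H] {s : Set H}
    (hs : IsCompact s) (hK : IsCompact K) (hμK : ∀ᵐ x ∂μ, x ∈ K) {F : H → α → G}
    (hF : ContinuousOn (uncurry F) (s ×ˢ K)) : ∃ C, ∀ᵐ x ∂μ, ∀ h ∈ s, ‖F h x‖ ≤ C := by
  obtain ⟨C, hC⟩ := (hs.prod hK).exists_bound_of_continuousOn hF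
  exact ⟨C, hμK.mono fun x hx h hh => hC (h, x) ⟨hh, hx⟩⟩

variable [T2Space α] [SecondCountableTopology α] [OpensMeasurableSpace α] [IsFiniteMeasure μ]
  [NormedSpace ℝ G]

lemma hasFDerivAt_integral_of_continuousOn_fderiv {H : Type*} [NormedAddCommGroup H]
    [NormedSpace ℝ H] (hK : IsCompact K) (hμK : ∀ᵐ x ∂μ, x ∈ K) {F : H → α → G}
    {F' : H → α → H →L[ℝ] G} {h₀ : H} {s : Set H} (hs : s ∈ 𝓝 h₀) (hs' : IsCompact s)
    (hF : ∀ h ∈ s, Continuous (F h)) (hF' : ContinuousOn (uncurry F') (s ×ˢ univ))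
    (hF'_deriv : ∀ x, ∀ h ∈ s, HasFDerivAt (F · x) (F' h x) h) :
    HasFDerivAt (fun h => ∫ x, F h x ∂μ) (∫ x, F' h₀ x ∂μ) h₀ := by
  obtain ⟨C, hC⟩ := exists_ae_bound_of_continuousOn_prod hs' hK hμK
    (hF'.mono (prod_mono_right (subset_univ K)))
  have hF'₀ : Continuous (F' h₀) :=
    hF'.comp_continuous (Continuous.prodMk_right h₀) fun x => ⟨mem_of_mem_nhds hs, trivial⟩
  exact hasFDerivAt_integral_of_dominated_of_fderiv_le hs
    (eventually_of_mem hs fun h hh => (hF h hh).aestronglyMeasurable)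
    (integrable_of_continuous_of_ae_mem_compact hK hμK (hF h₀ (mem_of_mem_nhds hs)))
    hF'₀.aestronglyMeasurable hC (integrable_const C) (ae_of_all _ hF'_deriv)

lemma hasDerivAt_integral_of_continuousOn_deriv (hK : IsCompact K) (hμK : ∀ᵐ x ∂μ, x ∈ K)
    {F F' : ℝ → α → G} {t₀ : ℝ} {s : Set ℝ} (hs : s ∈ 𝓝 t₀) (hs' : IsCompact s)
    (hF : ∀ t ∈ s, Continuous (F t)) (hF' : ContinuousOn (uncurry F') (s ×ˢ univ))
    (hF'_deriv : ∀ x, ∀ t ∈ s, HasDerivAt (F · x) (F' t x) t) :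
    HasDerivAt (fun t => ∫ x, F t x ∂μ) (∫ x, F' t₀ x ∂μ) t₀ := by
  obtain ⟨C, hC⟩ := exists_ae_bound_of_continuousOn_prod hs' hK hμK
    (hF'.mono (prod_mono_right (subset_univ K)))
  have hF'₀ : Continuous (F' t₀) :=
    hF'.comp_continuous (Continuous.prodMk_right t₀) fun x => ⟨mem_of_mem_nhds hs, trivial⟩
  exact (hasDerivAt_integral_of_dominated_loc_of_deriv_le hs
    (eventually_of_mem hs fun t ht => (hF t ht).aestronglyMeasurable)
    (integrable_of_continuous_of_ae_mem_compact hK hμK (hF t₀ (mem_of_mem_nhds hs)))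
    hF'₀.aestronglyMeasurable hC (integrable_const C) (ae_of_all _ hF'_deriv)).2

end CompactSupport

section Weight

variable {d : ℕ}

lemma continuous_wgt (w : ℝ) (y : EuclideanSpace ℝ (Fin d)) : Continuous (wgt w y) := by
  unfold wgt; fun_prop

lemma hasDerivAt_wgt {w : ℝ} (hw : w ≠ 0) (y x : EuclideanSpace ℝ (Fin d)) :
    HasDerivAt (fun w => wgt w y x) ((w ^ 3)⁻¹ * (wgt w y x * ‖x - y‖ ^ 2)) w := by
  have h := (((hasDerivAt_pow 2 w).inv (pow_ne_zero 2 hw)).const_mul (-‖x - y‖ ^ 2 / 2)).exp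
  simp only [Pi.inv_apply] at h
  convert h using 1
  · ext w; simp only [wgt]; congr 1; field_simp
  · simp only [wgt]; field_simp; ring_nf

lemma hasGradientAt_wgt (w : ℝ) (x z : EuclideanSpace ℝ (Fin d)) :
    HasGradientAt (fun z => wgt w z x) (((w ^ 2)⁻¹ * wgt w z x) • (x - z)) z := by
  have h := (((hasFDerivAt_id z).const_sub x).norm_sq.const_mul (-(2 * w ^ 2)⁻¹)).exp
  have hwgt : (fun z => wgt w z x) = fun z => exp (-(2 * w ^ 2)⁻¹ * ‖x - id z‖ ^ 2) := by
    ext z; simp only [wgt, id]; congr 1; ring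
  rw [hasGradientAt_iff_hasFDerivAt, hwgt]
  refine h.congr_fderiv ?_
  ext u
  simp only [wgt, id_eq, ContinuousLinearMap.comp_neg, ContinuousLinearMap.comp_id, neg_apply,
    smul_apply, coe_innerSL_apply, nsmul_eq_mul, smul_eq_mul, map_smul,
    InnerProductSpace.toDual_apply_apply]
  ring_nf

end Weight

section Posterior

variable {d : ℕ} {μ : Measure (EuclideanSpace ℝ (Fin d))} [IsFiniteMeasure μ]
  {K : Set (EuclideanSpace ℝ (Fin d))}

lemma integral_wgt_pos [NeZero μ] (w : ℝ) (y : EuclideanSpace ℝ (Fin d)) :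
    0 < ∫ x, wgt w y x ∂μ := by
  refine integral_exp_pos (Integrable.of_bound (continuous_wgt w y).aestronglyMeasurable 1
    (ae_of_all _ fun x => ?_))
  rw [norm_of_nonneg (exp_pos _).le, exp_le_one_iff, neg_div]
  exact neg_nonpos.2 (by positivity)

lemma hasDerivAt_integral_wgt_smul (hK : IsCompact K) (hμK : ∀ᵐ x ∂μ, x ∈ K) {G : Type*}
    [NormedAddCommGroup G] [NormedSpace ℝ G] {g : EuclideanSpace ℝ (Fin d) → G}
    (hg : Continuous g) {ω : ℝ} (hω : ω ≠ 0) (y : EuclideanSpace ℝ (Fin d)) :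
    HasDerivAt (fun w => ∫ x, wgt w y x • g x ∂μ)
      ((ω ^ 3)⁻¹ • ∫ x, (wgt ω y x * ‖x - y‖ ^ 2) • g x ∂μ) ω := by
  have hs : ∀ w ∈ closedBall ω (|ω| / 2), w ≠ 0 := by
    rintro w hw rfl
    rw [mem_closedBall, dist_zero_left, norm_eq_abs] at hw
    linarith [abs_pos.2 hω]
  rw [← integral_smul]
  refine hasDerivAt_integral_of_continuousOn_deriv hK hμK
    (F' := fun w x => (w ^ 3)⁻¹ • (wgt w y x * ‖x - y‖ ^ 2) • g x)
    (closedBall_mem_nhds ω (half_pos (abs_pos.2 hω))) (isCompact_closedBall ω _)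
    (fun w _ => (continuous_wgt w y).smul hg) ?_ fun x w hw => ?_
  · refine ContinuousOn.mono (s := {p : ℝ × EuclideanSpace ℝ (Fin d) | p.1 ≠ 0}) ?_
      fun p hp => hs p.1 hp.1
    unfold wgt uncurry
    fun_prop (disch := intro p hp; simp_all)
  · simpa only [smul_smul] using (hasDerivAt_wgt (hs w hw) y x).smul_const (g x)

lemma hasDerivAt_postMean [NeZero μ] (hK : IsCompact K) (hμK : ∀ᵐ x ∂μ, x ∈ K) {ω : ℝ}
    (hω : ω ≠ 0) (y : EuclideanSpace ℝ (Fin d)) :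
    HasDerivAt (fun w => postMean μ w y) ((ω ^ 3)⁻¹ • postCrossCov μ ω y) ω := by
  have hN := hasDerivAt_integral_wgt_smul hK hμK (g := fun _ => (1 : ℝ)) continuous_const hω y
  simp only [smul_eq_mul, mul_one] at hN
  have hV := hasDerivAt_integral_wgt_smul hK hμK continuous_id hω y
  refine ((hN.inv (integral_wgt_pos ω y).ne').smul hV).congr_deriv ?_
  simp only [postCrossCov, postMean, id]
  module

lemma hasGradientAt_integral_wgt (hK : IsCompact K) (hμK : ∀ᵐ x ∂μ, x ∈ K) (w : ℝ)
    (y : EuclideanSpace ℝ (Fin d)) :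
    HasGradientAt (fun z => ∫ x, wgt w z x ∂μ) ((w ^ 2)⁻¹ • ∫ x, wgt w y x • (x - y) ∂μ) y := by
  have hg : Integrable (fun x => ((w ^ 2)⁻¹ * wgt w y x) • (x - y)) μ :=
    integrable_of_continuous_of_ae_mem_compact hK hμK
      ((continuous_const.mul (continuous_wgt w y)).smul (continuous_id.sub continuous_const))
  have h := hasFDerivAt_integral_of_continuousOn_fderiv hK hμK
    (F' := fun z x => innerSL ℝ (((w ^ 2)⁻¹ * wgt w z x) • (x - z)))
    (closedBall_mem_nhds y one_pos) (isCompact_closedBall y 1) (fun z _ => continuous_wgt w z)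
    (by unfold wgt uncurry; fun_prop) fun x z _ => hasGradientAt_wgt w x z
  rw [(innerSL ℝ).integral_comp_commSL (by simp) hg] at h
  simp only [mul_smul, integral_smul] at h
  exact hasGradientAt_iff_hasFDerivAt.2 h

theorem sq_smul_gradient_log_integral_gaussDensity [NeZero μ] (hK : IsCompact K)
    (hμK : ∀ᵐ x ∂μ, x ∈ K) {w : ℝ} (hw : w ≠ 0) (y : EuclideanSpace ℝ (Fin d)) :
    w ^ 2 • gradient (fun z => log (∫ x, gaussDensity d w (z - x) ∂μ)) y = postMean μ w y - y := by
  obtain ⟨c, hc, hconv⟩ : ∃ c > 0, ∀ z : EuclideanSpace ℝ (Fin d),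
      ∫ x, gaussDensity d w (z - x) ∂μ = c * ∫ x, wgt w z x ∂μ := by
    refine ⟨(2 * π * w ^ 2) ^ (-(d : ℝ) / 2), rpow_pos_of_pos (by positivity) _, fun z => ?_⟩
    rw [← integral_const_mul]
    simp only [gaussDensity, wgt, norm_sub_rev]
  have hN := integral_wgt_pos (μ := μ) w y
  have hgrad : HasGradientAt (fun z => log (c * ∫ x, wgt w z x ∂μ))
      ((∫ x, wgt w y x ∂μ)⁻¹ • (w ^ 2)⁻¹ • ∫ x, wgt w y x • (x - y) ∂μ) y := by
    have h := ((hasGradientAt_iff_hasFDerivAt.1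
      (hasGradientAt_integral_wgt hK hμK w y)).const_mul c).log (mul_pos hc hN).ne'
    refine hasGradientAt_iff_hasFDerivAt.2 (h.congr_fderiv ?_)
    simp only [map_smulₛₗ, starRingEnd_apply, star_trivial, smul_smul]
    congr 1
    field_simp
  have hsplit :
      ∫ x, wgt w y x • (x - y) ∂μ = ∫ x, wgt w y x • x ∂μ - (∫ x, wgt w y x ∂μ) • y := by
    simp only [smul_sub]
    rw [integral_sub (f := fun x => wgt w y x • x) (g := fun x => wgt w y x • y)
      (integrable_of_continuous_of_ae_mem_compact hK hμK ((continuous_wgt w y).smul continuous_id))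
      (integrable_of_continuous_of_ae_mem_compact hK hμK
        ((continuous_wgt w y).smul continuous_const)), integral_smul_const]
  simp_rw [hconv]
  rw [hgrad.gradient, hsplit, postMean]
  match_scalars <;> field_simp

end Posterior

/-- `∂_ω (ω² ∇ log p_ω(y)) = ω⁻³ Cov_{q_ω}(X, ‖X - y‖² | Y = y)`. -/
theorem stmt7 {d : ℕ} (pX : Measure (EuclideanSpace ℝ (Fin d)))
    [IsProbabilityMeasure pX]
    (hsupp : ∃ K : Set (EuclideanSpace ℝ (Fin d)), IsCompact K ∧ pX Kᶜ = 0)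
    (ω : ℝ) (hω : 0 < ω) (y : EuclideanSpace ℝ (Fin d)) :
    HasDerivAt
      (fun w : ℝ => w ^ 2 • gradient (fun z => Real.log (∫ x, gaussDensity d w (z - x) ∂pX)) y)
      ((ω ^ 3)⁻¹ • postCrossCov pX ω y) ω := by
  obtain ⟨K, hK, hK0⟩ := hsupp
  have hμK : ∀ᵐ x ∂pX, x ∈ K := mem_ae_iff.2 hK0
  refine ((hasDerivAt_postMean hK hμK hω.ne' y).sub_const y).congr_of_eventuallyEq ?_
  filter_upwards [eventually_ne_nhds hω.ne'] with w hw
  exact sq_smul_gradient_log_integral_gaussDensity hK hμK hw y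
end

section
/- Let $\Theta(\omega) = c\,\omega^{-3}$ on $[\sigma_T, \sigma_0]$ with normalizing constant $c = 2/(\sigma_T^{-2} - \sigma_0^{-2})$, and let $\mathsf{a} \in (0,1)$, $\sigma(t) = \sigma_0 e^{-(1-\mathsf{a})t}$, $a(t) = \mathsf{a}\sigma(t)^2$, $T = \frac{1}{1-\mathsf{a}}\log(\sigma_0/\sigma_T)$. Then for any nonnegative measurable $\varepsilon$, $\int_0^T \frac{\varepsilon(\sigma(t))^2}{a(t)}\,dt = \frac{1}{c\,\mathsf{a}(1-\mathsf{a})} \int_{\sigma_T}^{\sigma_0} \varepsilon(\omega)^2\,\Theta(\omega)\,d\omega$, i.e., the time-integrated score error is exactly proportional to the $\Theta$-averaged squared error. -/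
open Real intervalIntegral

/-! Substituting `ω = σ₀ e^{-bt}` gives `dt = -dω / (b ω)`, so `∫₀ᵀ ε(σ(t))² / (a σ(t)²) dt`
becomes `(a b)⁻¹ ∫ ε(ω)² ω⁻³ dω`; the weight `ω⁻³` is exactly the prior `Θ` up to its constant. -/

lemma exp_schedule_hitting_time {b σ0 σT : ℝ} (hb : b ≠ 0) (hσ0 : 0 < σ0) (hσT : 0 < σT) :
    σ0 * exp (-b * (b⁻¹ * log (σ0 / σT))) = σT := by
  rw [show -b * (b⁻¹ * log (σ0 / σT)) = -log (σ0 / σT) by field_simp, exp_neg,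
    exp_log (div_pos hσ0 hσT)]
  field_simp

theorem integral_comp_exp_schedule {b σ0 : ℝ} (hb : 0 < b) (hσ0 : 0 < σ0) (h : ℝ → ℝ) (T : ℝ) :
    ∫ t in (0:ℝ)..T, h (σ0 * exp (-b * t))
      = b⁻¹ * ∫ ω in σ0 * exp (-b * T)..σ0, h ω / ω := by
  set σ : ℝ → ℝ := fun t => σ0 * exp (-b * t)
  have hσpos (t : ℝ) : 0 < σ t := mul_pos hσ0 (exp_pos _)
  have hderiv (t : ℝ) : HasDerivAt σ (-b * σ t) t := by
    refine (((hasDerivAt_id' t).const_mul (-b)).exp.const_mul σ0).congr_deriv ?_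
    simp only [σ]
    ring
  have hsubst := integral_comp_mul_deriv_of_deriv_nonpos (a := 0) (b := T) (g := fun ω => h ω / ω)
    (fun t _ => (hderiv t).continuousAt.continuousWithinAt) (fun t _ => hderiv t)
    (fun t _ => by nlinarith [hσpos t])
  have hintegrand (t : ℝ) : ((fun ω => h ω / ω) ∘ σ) t * (-b * σ t) = -b * h (σ t) := by
    simp only [Function.comp_apply]
    field_simp [(hσpos t).ne']
  simp only [hintegrand, integral_const_mul, show σ 0 = σ0 by simp [σ]] at hsubst
  rw [integral_symm σ0 (σ T), ← hsubst, neg_mul, neg_neg, inv_mul_cancel_left₀ hb.ne']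

theorem stmt14_general (a σ0 σT : ℝ) (ha : a ∈ Set.Ioo (0:ℝ) 1) (hσT : 0 < σT) (hlt : σT < σ0)
    (ε : ℝ → ℝ) :
    (∫ t in (0:ℝ)..((1 - a)⁻¹ * Real.log (σ0 / σT)),
        ε (σ0 * Real.exp (-(1 - a) * t)) ^ 2 / (a * (σ0 * Real.exp (-(1 - a) * t)) ^ 2))
      = (2 / ((σT ^ 2)⁻¹ - (σ0 ^ 2)⁻¹) * a * (1 - a))⁻¹
        * ∫ ω in σT..σ0, ε ω ^ 2 * (2 / ((σT ^ 2)⁻¹ - (σ0 ^ 2)⁻¹) * (ω ^ 3)⁻¹) := by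
  have hb : 0 < 1 - a := sub_pos.2 ha.2
  have hσ0 : 0 < σ0 := hσT.trans hlt
  set c := 2 / ((σT ^ 2)⁻¹ - (σ0 ^ 2)⁻¹)
  have hc : c ≠ 0 := by
    have : (σ0 ^ 2)⁻¹ < (σT ^ 2)⁻¹ := inv_strictAnti₀ (by positivity) (by gcongr)
    exact div_ne_zero two_ne_zero (sub_pos.2 this).ne'
  rw [integral_comp_exp_schedule (h := fun ω => ε ω ^ 2 / (a * ω ^ 2)) hb hσ0,
    exp_schedule_hitting_time hb.ne' hσ0 hσT]
  have hweight (ω : ℝ) : ε ω ^ 2 / (a * ω ^ 2) / ω = a⁻¹ * (ε ω ^ 2 * (ω ^ 3)⁻¹) := by ring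
  have hprior (ω k : ℝ) : ε ω ^ 2 * (k * (ω ^ 3)⁻¹) = k * (ε ω ^ 2 * (ω ^ 3)⁻¹) := by ring
  simp only [hweight, hprior, integral_const_mul]
  field_simp

/-- For the prior `Θ(ω) = c ω⁻³` on `[σ_T, σ₀]` with `c = 2/(σ_T⁻² - σ₀⁻²)`, and the
exponential schedule `σ(t) = σ₀ e^{-(1-a)t}`, `a(t) = a σ(t)²`, `T = (1-a)⁻¹ log(σ₀/σ_T)`,
the time-integrated score error is exactly proportional to the `Θ`-averaged squared error:
`∫₀ᵀ ε(σ(t))²/a(t) dt = (c a (1-a))⁻¹ ∫_{σ_T}^{σ₀} ε(ω)² Θ(ω) dω`. -/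
theorem stmt14 (a σ0 σT : ℝ) (ha : a ∈ Set.Ioo (0:ℝ) 1) (hσT : 0 < σT) (hlt : σT < σ0)
    (ε : ℝ → ℝ) (hεmeas : Measurable ε) (hεpos : ∀ ω, 0 ≤ ε ω) :
    (∫ t in (0:ℝ)..((1 - a)⁻¹ * Real.log (σ0 / σT)),
        ε (σ0 * Real.exp (-(1 - a) * t)) ^ 2 / (a * (σ0 * Real.exp (-(1 - a) * t)) ^ 2))
      = (2 / ((σT ^ 2)⁻¹ - (σ0 ^ 2)⁻¹) * a * (1 - a))⁻¹
        * ∫ ω in σT..σ0, ε ω ^ 2 * (2 / ((σT ^ 2)⁻¹ - (σ0 ^ 2)⁻¹) * (ω ^ 3)⁻¹) :=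
  stmt14_general a σ0 σT ha hσT hlt ε
end
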